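/- Let L be a partially ordered set, 𝒫 ⊆ L, and F ∈ α^F̲(𝒫) a minimal element of 𝒫. Then φ^⊑(F)(𝒫) = α^⊑(φ^⊑(F)(𝒫)) ∩ {P ∈ L | F ≤ P}; moreover, when L is a complete lattice, F = sInf (φ^⊑(F)(𝒫)), so φ^⊑(F)(𝒫) is the intersection of its lower closure with the principal filter generated by its infimum (i.e., it is a fixed point of the conjunctive abstraction combining the order-ideal abstraction and the principal-filter abstraction). -/
import Mathlib

/-- The lower frontier: minimal elements of a subset of a poset. -/
def minFrontier {L : Type*} [PartialOrder L] (P : Set L) : Set L :=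
  {x : L | x ∈ P ∧ ∀ x' ∈ P, x' ≤ x → x' = x}

/-- The order-ideal (lower-closure) abstraction. -/
def lowClose {L : Type*} [LE L] (P : Set L) : Set L :=
  {y : L | ∃ x ∈ P, y ≤ x}

/-- `φ^⊑(F)(X)`: elements of `X` above `F` whose whole interval down to `F` lies in `X`. -/
def phiLow {L : Type*} [PartialOrder L] (F : L) (X : Set L) : Set L :=
  {x : L | x ∈ X ∧ F ≤ x ∧ ∀ y : L, F ≤ y → y ≤ x → y ∈ X}

/-- For a minimal element `F` of `P`, `φ^⊑(F)(P)` equals the intersection of its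
lower closure with the principal filter generated by `F`; and in a complete lattice
`F` is the infimum of `φ^⊑(F)(P)`: `φ^⊑(F)(P)` is a fixed point of the conjunctive
abstraction combining the order-ideal and principal-filter abstractions. -/
theorem phiLow_conjunctive_abstraction.{u, v} :
    (∀ (L : Type u) [PartialOrder L] (P : Set L) (F : L),
        F ∈ minFrontier P →
          phiLow F P = lowClose (phiLow F P) ∩ {x : L | F ≤ x}) ∧
    (∀ (L : Type v) [CompleteLattice L] (P : Set L) (F : L),
        F ∈ minFrontier P → F = sInf (phiLow F P)) := by
  constructor
  · intro L _ P F _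
    ext y
    constructor
    · intro hy
      exact ⟨⟨y, hy, le_refl y⟩, hy.2.1⟩
    · rintro ⟨⟨x, hx, hyx⟩, hFy⟩
      exact ⟨hx.2.2 y hFy hyx, hFy, fun z hFz hzy => hx.2.2 z hFz (hzy.trans hyx)⟩
  · intro L _ P F hF
    have hFin : F ∈ phiLow F P :=
      ⟨hF.1, le_refl F, fun y hFy hyF => (le_antisymm hyF hFy ▸ hF.1)⟩
    exact le_antisymm (le_sInf fun x hx => hx.2.1) (sInf_le hFin)
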